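/- Let L be a PG-lattice and M be a faithful multiplication PG-lattice L-module with I_M compact. If N ∈ M is a p-pseudo-primary element (i.e., N is pseudo-primary and p = √(N:I_M) is a prime element of L), then N ∨ pI_M = rad(N) and N ∨ pI_M is a prime element of M; in particular rad(N) is prime. -/

import Mathlib

open CompleteLattice

universe u v

/-- A multiplicative lattice: a complete lattice with a commutative, associative
multiplication distributing over arbitrary joins, whose greatest element `⊤` is the
multiplicative identity `1`.  Following the standing assumptions of the paper, we also
require that the lattice is compactly generated, that `1` is compact and that finite
products of compact elements are compact. -/
class MultiplicativeLattice (L : Type u) extends CompleteLattice L, CommMonoid L where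
  mul_sSup : ∀ (a : L) (S : Set L), a * sSup S = ⨆ b ∈ S, a * b
  one_eq_top : (1 : L) = ⊤
  compactlyGenerated : ∀ a : L, a = sSup {c : L | IsCompactElement c ∧ c ≤ a}
  top_compact : IsCompactElement (⊤ : L)
  mul_compact : ∀ a b : L, IsCompactElement a → IsCompactElement b →
    IsCompactElement (a * b)

/-- A lattice module `M` over a multiplicative lattice `L`. -/
class LatticeModule (L : Type u) [MultiplicativeLattice L] (M : Type v)
    extends CompleteLattice M, SMul L M where
  sSup_smul : ∀ (S : Set L) (A : M), (SupSet.sSup S : L) • A = ⨆ a ∈ S, a • A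
  smul_sSup : ∀ (a : L) (S : Set M), a • (sSup S) = ⨆ B ∈ S, a • B
  mul_smul : ∀ (a b : L) (A : M), (a * b) • A = a • b • A
  one_smul : ∀ A : M, (1 : L) • A = A
  bot_smul : ∀ A : M, (⊥ : L) • A = (⊥ : M)

section LDefs

variable {L : Type u} [MultiplicativeLattice L]

/-- The residual `(a : b)` in `L`. -/
def lcolon (a b : L) : L := sSup {x : L | x * b ≤ a}

/-- The radical `√a` of an element of `L`. -/
def lrad (a : L) : L :=
  sSup {x : L | IsCompactElement x ∧ ∃ n : ℕ, 0 < n ∧ x ^ n ≤ a}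

/-- A prime element of `L`: proper, and `a * b ≤ p` implies `a ≤ p` or `b ≤ p`. -/
def IsPrimeL (p : L) : Prop :=
  p < 1 ∧ ∀ a b : L, a * b ≤ p → a ≤ p ∨ b ≤ p

/-- A primary element of `L`: proper, and for compact `a, b`, `a * b ≤ q` implies
`a ≤ q` or `b ^ n ≤ q` for some positive `n`. -/
def IsPrimaryL (q : L) : Prop :=
  q < 1 ∧ ∀ a b : L, IsCompactElement a → IsCompactElement b → a * b ≤ q →
    a ≤ q ∨ ∃ n : ℕ, 0 < n ∧ b ^ n ≤ q

/-- A principal element of `L` (meet principal and join principal). -/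
def IsPrincipalElemL (e : L) : Prop :=
  (∀ a b : L, a ⊓ b * e = (lcolon a e ⊓ b) * e) ∧
  (∀ a b : L, lcolon (a * e ⊔ b) e = lcolon b e ⊔ a)

end LDefs

/-- `L` is a PG-lattice: every element is a join of principal elements. -/
def IsPGLattice (L : Type u) [MultiplicativeLattice L] : Prop :=
  ∀ a : L, a = sSup {p : L | IsPrincipalElemL p ∧ p ≤ a}

section MDefs

variable (L : Type u) {M : Type v} [MultiplicativeLattice L] [LatticeModule L M]

/-- The residual `(A : B) ∈ L` of two elements of `M`. -/
def colon (A B : M) : L := sSup {x : L | x • B ≤ A}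

/-- The residual `(N : a) ∈ M` of an element of `M` by an element of `L`. -/
def mcolon (N : M) (a : L) : M := sSup {X : M | a • X ≤ N}

/-- A prime element of `M`. -/
def IsPrimeM (N : M) : Prop :=
  N < ⊤ ∧ ∀ (a : L) (X : M), a • X ≤ N → X ≤ N ∨ a • (⊤ : M) ≤ N

/-- A primary element of `M`. -/
def IsPrimaryM (N : M) : Prop :=
  N < ⊤ ∧ ∀ (a : L) (X : M), a • X ≤ N →
    X ≤ N ∨ ∃ n : ℕ, 0 < n ∧ (a ^ n) • (⊤ : M) ≤ N

/-- The radical `rad N` of an element of `M`: the meet of all prime elements above it. -/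
def mrad (N : M) : M := sInf {P : M | IsPrimeM L P ∧ N ≤ P}

/-- A pseudo-primary element of `M`. -/
def IsPseudoPrimary (N : M) : Prop :=
  N < ⊤ ∧ ∀ (a : L) (X : M), a • X ≤ N → a ≤ colon L N ⊤ ∨ X ≤ mrad L N

/-- A classical prime element of `M`. -/
def IsClassicalPrime (N : M) : Prop :=
  N < ⊤ ∧ ∀ (a b : L) (K : M), (a * b) • K ≤ N → a • K ≤ N ∨ b • K ≤ N

/-- A pseudo-classical primary element of `M`. -/
def IsPseudoClassicalPrimary (N : M) : Prop :=
  N < ⊤ ∧ ∀ (a b : L) (K : M), (a * b) • K ≤ N → a • K ≤ N ∨ b • K ≤ mrad L N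

/-- A principal element of `M` (meet principal and join principal). -/
def IsPrincipalElem (N : M) : Prop :=
  (∀ (b : L) (B : M), (b ⊓ colon L B N) • N = b • N ⊓ B) ∧
  (∀ (b : L) (B : M), b ⊔ colon L B N = colon L (b • N ⊔ B) N)

/-- The saturation `S_p(N)` of `N` with respect to `p`. -/
def saturation (N : M) (p : L) : M :=
  sSup {X : M | ∃ c : L, ¬ c ≤ p ∧ c • X ≤ N}

variable (M)

/-- `M` is a PG-lattice `L`-module. -/
def IsPGModule : Prop := ∀ N : M, N = sSup {P : M | IsPrincipalElem L P ∧ P ≤ N}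

/-- `M` is a multiplication lattice `L`-module. -/
def IsMultiplicationModule : Prop := ∀ N : M, ∃ a : L, N = a • (⊤ : M)

/-- `M` is a faithful `L`-module. -/
def IsFaithful : Prop := colon L (⊥ : M) (⊤ : M) = (⊥ : L)

/-- `M` is a CG (compactly generated) lattice `L`-module. -/
def IsCGModule : Prop := ∀ N : M, N = sSup {K : M | IsCompactElement K ∧ K ≤ N}

end MDefs


section Proof

variable {L : Type u} {M : Type v} [MultiplicativeLattice L] [LatticeModule L M]

lemma ml_mul_sup (a b c : L) : a * (b ⊔ c) = a * b ⊔ a * c := by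
  have h := MultiplicativeLattice.mul_sSup a {b, c}
  rw [sSup_pair] at h
  rw [h, iSup_pair]

lemma ml_mul_mono_right {b c : L} (a : L) (h : b ≤ c) : a * b ≤ a * c := by
  have : a * c = a * b ⊔ a * c := by rw [← ml_mul_sup, sup_eq_right.mpr h]
  rw [this]; exact le_sup_left

lemma ml_le_one (a : L) : a ≤ 1 := by
  rw [MultiplicativeLattice.one_eq_top]; exact le_top

lemma ml_mul_le_left (a b : L) : a * b ≤ a := by
  have := ml_mul_mono_right a (ml_le_one b)
  simpa using this

lemma ml_mul_le_right (a b : L) : a * b ≤ b := by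
  rw [mul_comm]; exact ml_mul_le_left b a

lemma lm_sup_smul (a b : L) (C : M) : (a ⊔ b) • C = a • C ⊔ b • C := by
  have h := LatticeModule.sSup_smul ({a, b} : Set L) C
  rw [sSup_pair] at h
  rw [h, iSup_pair]

lemma lm_smul_sup (a : L) (B C : M) : a • (B ⊔ C) = a • B ⊔ a • C := by
  have h := LatticeModule.smul_sSup a ({B, C} : Set M)
  rw [sSup_pair] at h
  rw [h, iSup_pair]

lemma lm_smul_mono_left {a b : L} (h : a ≤ b) (C : M) : a • C ≤ b • C := by
  have : b • C = a • C ⊔ b • C := by rw [← lm_sup_smul, sup_eq_right.mpr h]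
  rw [this]; exact le_sup_left

lemma lm_smul_mono_right (a : L) {B C : M} (h : B ≤ C) : a • B ≤ a • C := by
  have : a • C = a • B ⊔ a • C := by rw [← lm_smul_sup, sup_eq_right.mpr h]
  rw [this]; exact le_sup_left

lemma lm_smul_le (a : L) (B : M) : a • B ≤ B := by
  have h := lm_smul_mono_left (ml_le_one a) B
  rwa [LatticeModule.one_smul] at h

lemma lm_smul_comm (a b : L) (C : M) : a • (b • C) = b • (a • C) := by
  rw [← LatticeModule.mul_smul, mul_comm, LatticeModule.mul_smul]

lemma colon_smul_le (A B : M) : colon L A B • B ≤ A := by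
  rw [colon, LatticeModule.sSup_smul]
  exact iSup₂_le fun x hx => hx

lemma le_colon {z : L} {A B : M} (h : z • B ≤ A) : z ≤ colon L A B :=
  _root_.le_sSup h

/-- In a multiplication module, `N = (N : ⊤) • ⊤`. -/
lemma mulmod_colon_smul (hmul : IsMultiplicationModule L M) (N : M) :
    colon L N (⊤ : M) • (⊤ : M) = N := by
  obtain ⟨a, ha⟩ := hmul N
  refine le_antisymm (colon_smul_le N ⊤) ?_
  have : a ≤ colon L N ⊤ := le_colon (by rw [← ha])
  calc N = a • ⊤ := ha
    _ ≤ colon L N ⊤ • ⊤ := lm_smul_mono_left this ⊤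

lemma le_lrad (a : L) : a ≤ lrad a := by
  conv_lhs => rw [MultiplicativeLattice.compactlyGenerated a]
  apply _root_.sSup_le_sSup
  rintro x ⟨hx, hxa⟩
  exact ⟨hx, 1, one_pos, by simpa using hxa⟩

/-- powers of elements below a "prime like" element. -/
lemma pow_le_primelike {t x : L} (ht : ∀ a b : L, a * b ≤ t → a ≤ t ∨ b ≤ t)
    {n : ℕ} (hn : 0 < n) (h : x ^ n ≤ t) : x ≤ t := by
  induction n with
  | zero => exact absurd hn (lt_irrefl 0)
  | succ n ih =>
    rcases Nat.eq_zero_or_pos n with rfl | hn'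
    · simpa using h
    · rw [pow_succ] at h
      rcases ht _ _ h with h' | h'
      · exact ih hn' h'
      · exact h'

lemma lrad_le_primelike {t b : L} (ht : ∀ a c : L, a * c ≤ t → a ≤ t ∨ c ≤ t)
    (hb : b ≤ t) : lrad b ≤ t := by
  apply _root_.sSup_le
  rintro x ⟨-, n, hn, hxn⟩
  exact pow_le_primelike ht hn (le_trans hxn hb)

lemma sup_pow_le (x y : L) : ∀ s t : ℕ, (x ⊔ y) ^ (s + t) ≤ x ^ s ⊔ y ^ t := by
  intro s
  induction s with
  | zero =>
    intro t
    rw [pow_zero, MultiplicativeLattice.one_eq_top]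
    exact le_sup_of_le_left le_top
  | succ s ihs =>
    intro t
    induction t with
    | zero =>
      rw [pow_zero, MultiplicativeLattice.one_eq_top]
      exact le_sup_of_le_right le_top
    | succ t iht =>
      have e1 : (x ⊔ y) ^ (s + 1 + (t + 1)) = (x ⊔ y) ^ (s + 1 + t) * (x ⊔ y) := by
        rw [show s + 1 + (t + 1) = (s + 1 + t) + 1 from rfl, pow_succ]
      rw [e1, ml_mul_sup]
      have h1 : (x ⊔ y) ^ (s + 1 + t) * x ≤ x ^ (s + 1) ⊔ y ^ (t + 1) := by
        have e2 : s + 1 + t = s + (t + 1) := by omega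
        rw [e2, mul_comm]
        refine le_trans (ml_mul_mono_right x (ihs (t + 1))) ?_
        rw [ml_mul_sup]
        apply sup_le
        · rw [mul_comm, ← pow_succ]; exact le_sup_left
        · exact le_sup_of_le_right (ml_mul_le_right x _)
      have h2 : (x ⊔ y) ^ (s + 1 + t) * y ≤ x ^ (s + 1) ⊔ y ^ (t + 1) := by
        rw [mul_comm]
        refine le_trans (ml_mul_mono_right y iht) ?_
        rw [ml_mul_sup]
        apply sup_le
        · exact le_sup_of_le_left (ml_mul_le_right y _)
        · rw [mul_comm, ← pow_succ]; exact le_sup_right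
      exact sup_le h1 h2

lemma ml_bot_compact : IsCompactElement (⊥ : L) := by
  intro s _ hne _ _ _
  obtain ⟨x, hx⟩ := hne
  exact ⟨x, hx, bot_le⟩

/-- The defining set of `lrad a` is directed and nonempty. -/
lemma lrad_set_directed (a : L) :
    DirectedOn (· ≤ ·) {x : L | IsCompactElement x ∧ ∃ n : ℕ, 0 < n ∧ x ^ n ≤ a} := by
  classical
  rintro x ⟨hx, m, hm, hxm⟩ y ⟨hy, n, hn, hyn⟩
  refine ⟨x ⊔ y, ⟨?_, m + n, by omega, ?_⟩, le_sup_left, le_sup_right⟩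
  · rw [isCompactElement_iff_exists_le_sSup_of_le_sSup]
    intro s hs
    obtain ⟨t1, ht1, ht1'⟩ := (isCompactElement_iff_exists_le_sSup_of_le_sSup L x).mp hx s (le_trans le_sup_left hs)
    obtain ⟨t2, ht2, ht2'⟩ := (isCompactElement_iff_exists_le_sSup_of_le_sSup L y).mp hy s (le_trans le_sup_right hs)
    refine ⟨t1 ∪ t2, ?_, ?_⟩
    · intro u hu
      rcases Finset.mem_union.mp (Finset.mem_coe.mp hu) with h | h
      · exact ht1 (Finset.mem_coe.mpr h)
      · exact ht2 (Finset.mem_coe.mpr h)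
    · rw [Finset.sup_union]
      exact sup_le (le_trans ht1' le_sup_left) (le_trans ht2' le_sup_right)
  · exact le_trans (sup_pow_le x y m n) (sup_le hxm hyn)

lemma lrad_set_nonempty (a : L) :
    Set.Nonempty {x : L | IsCompactElement x ∧ ∃ n : ℕ, 0 < n ∧ x ^ n ≤ a} :=
  ⟨⊥, ml_bot_compact, 1, one_pos, by simp⟩

lemma lm_pow_smul_mono {x y : L} (h : x • (⊤ : M) ≤ y • (⊤ : M)) :
    ∀ n : ℕ, x ^ n • (⊤ : M) ≤ y ^ n • (⊤ : M) := by
  intro n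
  induction n with
  | zero => simp
  | succ n ih =>
    rw [pow_succ, pow_succ, LatticeModule.mul_smul, LatticeModule.mul_smul]
    calc x ^ n • x • (⊤ : M) ≤ x ^ n • y • (⊤ : M) := lm_smul_mono_right _ h
      _ = y • x ^ n • (⊤ : M) := lm_smul_comm _ _ _
      _ ≤ y • y ^ n • (⊤ : M) := lm_smul_mono_right _ ih
      _ = y ^ n • y • (⊤ : M) := lm_smul_comm _ _ _

lemma directed_finset_choice {D : Set L} (hD : DirectedOn (· ≤ ·) D)
    (hne : D.Nonempty) (t : Finset M) (P : L → M → Prop)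
    (hmono : ∀ y y' : L, ∀ E : M, y ≤ y' → P y E → P y' E)
    (h : ∀ E ∈ t, ∃ y ∈ D, P y E) : ∃ y ∈ D, ∀ E ∈ t, P y E := by
  classical
  induction t using Finset.induction_on with
  | empty => obtain ⟨y, hy⟩ := hne; exact ⟨y, hy, by simp⟩
  | @insert E s hEs ih =>
    obtain ⟨y₁, hy₁, hy₁s⟩ := ih (fun F hF => h F (Finset.mem_insert_of_mem hF))
    obtain ⟨y₂, hy₂, hy₂E⟩ := h E (Finset.mem_insert_self E s)
    obtain ⟨y, hyD, h1, h2⟩ := hD y₁ hy₁ y₂ hy₂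
    refine ⟨y, hyD, fun F hF => ?_⟩
    rcases Finset.mem_insert.mp hF with rfl | hF
    · exact hmono _ _ _ h2 hy₂E
    · exact hmono _ _ _ h1 (hy₁s F hF)

/-- Key technical lemma: a compact element whose image is below `lrad (N:⊤) • ⊤`
is itself below `lrad (N:⊤)`. -/
lemma key_compact_le (hmul : IsMultiplicationModule L M) (hPGM : IsPGModule L M)
    (hcomp : IsCompactElement (⊤ : M)) (N : M) {z : L} (hz : IsCompactElement z)
    (h : z • (⊤ : M) ≤ lrad (colon L N (⊤ : M)) • (⊤ : M)) :
    z ≤ lrad (colon L N (⊤ : M)) := by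
  classical
  set a := colon L N (⊤ : M) with ha
  set D := {x : L | IsCompactElement x ∧ ∃ n : ℕ, 0 < n ∧ x ^ n ≤ a} with hDdef
  have hDdir : DirectedOn (· ≤ ·) D := lrad_set_directed a
  have hDne : D.Nonempty := lrad_set_nonempty a
  have hlrad : lrad a = sSup D := rfl
  -- decompose ⊤ into finitely many principal elements
  obtain ⟨t, ht_sub, ht_le⟩ := (isCompactElement_iff_exists_le_sSup_of_le_sSup M ⊤).mp hcomp _ (le_of_eq (hPGM (⊤ : M)))
  have htop : (⊤ : M) = sSup (↑t : Set M) := by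
    refine le_antisymm ?_ le_top
    rw [← Finset.sup_id_eq_sSup]; exact ht_le
  -- for each principal E in t, find y ∈ D with z • E ≤ y • E
  have hper : ∀ E ∈ t, ∃ y ∈ D, z • E ≤ y • E := by
    intro E hEt
    obtain ⟨hEprin, -⟩ := ht_sub hEt
    have hEeq : colon L E (⊤ : M) • (⊤ : M) = E := mulmod_colon_smul hmul E
    set f := colon L (⊥ : M) E with hf
    -- z • E ≤ (sSup D) • E
    have hzE : z • E ≤ sSup D • E := by
      calc z • E = z • (colon L E ⊤ • ⊤) := by rw [hEeq]
        _ = colon L E ⊤ • (z • ⊤) := lm_smul_comm _ _ _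
        _ ≤ colon L E ⊤ • (lrad a • ⊤) := lm_smul_mono_right _ h
        _ = lrad a • (colon L E ⊤ • ⊤) := lm_smul_comm _ _ _
        _ = sSup D • E := by rw [hEeq, hlrad]
    -- join principal : sSup D ⊔ f = colon ((sSup D) • E) E
    have hjp := hEprin.2 (sSup D) (⊥ : M)
    rw [sup_bot_eq] at hjp
    have hzle : z ≤ sSup D ⊔ f := by
      rw [hjp]
      exact le_colon hzE
    -- sSup D ⊔ f = sSup of the image of (· ⊔ f)
    have himg : sSup D ⊔ f = sSup ((fun y => y ⊔ f) '' D) := by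
      apply le_antisymm
      · apply sup_le
        · exact _root_.sSup_le fun y hy => le_trans le_sup_left
            (_root_.le_sSup (Set.mem_image_of_mem _ hy))
        · obtain ⟨y₀, hy₀⟩ := hDne
          exact le_trans le_sup_right (_root_.le_sSup (Set.mem_image_of_mem _ hy₀))
      · apply _root_.sSup_le
        rintro _ ⟨y, hy, rfl⟩
        exact sup_le (le_trans (_root_.le_sSup hy) le_sup_left) le_sup_right
    have hdir' : DirectedOn (· ≤ ·) ((fun y => y ⊔ f) '' D) := by
      rintro _ ⟨y1, hy1, rfl⟩ _ ⟨y2, hy2, rfl⟩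
      obtain ⟨y, hy, h1, h2⟩ := hDdir y1 hy1 y2 hy2
      exact ⟨y ⊔ f, Set.mem_image_of_mem _ hy,
        sup_le_sup_right h1 f, sup_le_sup_right h2 f⟩
    have hne' : ((fun y => y ⊔ f) '' D).Nonempty := hDne.image _
    rw [himg] at hzle
    obtain ⟨_, ⟨y, hyD, rfl⟩, hzy⟩ :=
      (isCompactElement_iff_le_of_directed_sSup_le L z).mp hz _ hne' hdir' hzle
    refine ⟨y, hyD, ?_⟩
    have : z • E ≤ (y ⊔ f) • E := lm_smul_mono_left hzy E
    rw [lm_sup_smul] at this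
    have hfE : f • E ≤ (⊥ : M) := colon_smul_le ⊥ E
    calc z • E ≤ y • E ⊔ f • E := this
      _ ≤ y • E ⊔ ⊥ := sup_le_sup_left hfE _
      _ = y • E := by rw [sup_bot_eq]
  -- merge the finitely many witnesses
  obtain ⟨y, hyD, hy⟩ := directed_finset_choice hDdir hDne t (fun y E => z • E ≤ y • E)
    (fun y y' E hyy' hP => le_trans hP (lm_smul_mono_left hyy' E)) hper
  -- conclude z • ⊤ ≤ y • ⊤
  have hztop : z • (⊤ : M) ≤ y • (⊤ : M) := by
    rw [htop, LatticeModule.smul_sSup]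
    apply iSup₂_le
    intro E hE
    exact le_trans (hy E hE) (lm_smul_mono_right y (_root_.le_sSup (Finset.mem_coe.mpr hE)))
  obtain ⟨hycomp, n, hn, hyn⟩ := hyD
  have hpow : z ^ n • (⊤ : M) ≤ y ^ n • (⊤ : M) := lm_pow_smul_mono hztop n
  have hzn : z ^ n • (⊤ : M) ≤ N := by
    calc z ^ n • (⊤ : M) ≤ y ^ n • ⊤ := hpow
      _ ≤ a • ⊤ := lm_smul_mono_left hyn ⊤
      _ ≤ N := colon_smul_le N ⊤
  exact _root_.le_sSup ⟨hz, n, hn, le_colon hzn⟩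

end Proof

theorem stmt9 {L : Type u} {M : Type v} [MultiplicativeLattice L] [LatticeModule L M]
    (hPG : IsPGLattice L) (hfaith : IsFaithful L M)
    (hmul : IsMultiplicationModule L M) (hPGM : IsPGModule L M)
    (hcomp : IsCompactElement (⊤ : M))
    (N : M) (hN : IsPseudoPrimary L N) (p : L) (hp : p = lrad (colon L N (⊤ : M)))
    (hprime : IsPrimeL p) :
    N ⊔ p • (⊤ : M) = mrad L N ∧ IsPrimeM L (N ⊔ p • (⊤ : M)) ∧ IsPrimeM L (mrad L N) := by
  subst hp
  set a := colon L N (⊤ : M) with ha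
  -- `N ≤ (lrad a) • ⊤`
  have hNle : N ≤ lrad a • (⊤ : M) := by
    conv_lhs => rw [← mulmod_colon_smul hmul N]
    exact lm_smul_mono_left (le_lrad a) ⊤
  -- properness of `(lrad a) • ⊤`
  have hproper : lrad a • (⊤ : M) < ⊤ := by
    rw [lt_top_iff_ne_top]
    intro htop
    set D := {x : L | IsCompactElement x ∧ ∃ n : ℕ, 0 < n ∧ x ^ n ≤ a} with hD
    have himg : lrad a • (⊤ : M) = sSup ((fun x => x • (⊤ : M)) '' D) := by
      rw [lrad, LatticeModule.sSup_smul, ← sSup_image]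
    have hdir : DirectedOn (· ≤ ·) ((fun x => x • (⊤ : M)) '' D) := by
      rintro _ ⟨x1, hx1, rfl⟩ _ ⟨x2, hx2, rfl⟩
      obtain ⟨x, hx, h1, h2⟩ := lrad_set_directed a x1 hx1 x2 hx2
      exact ⟨x • ⊤, Set.mem_image_of_mem _ hx,
        lm_smul_mono_left h1 ⊤, lm_smul_mono_left h2 ⊤⟩
    have hne : ((fun x => x • (⊤ : M)) '' D).Nonempty := (lrad_set_nonempty a).image _
    have htle : (⊤ : M) ≤ sSup ((fun x => x • (⊤ : M)) '' D) := by
      rw [← himg, htop]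
    obtain ⟨_, ⟨x, hxD, rfl⟩, hx⟩ :=
      (isCompactElement_iff_le_of_directed_sSup_le M ⊤).mp hcomp _ hne hdir htle
    obtain ⟨-, n, hn, hxn⟩ := hxD
    have hchain : ∀ k : ℕ, (⊤ : M) ≤ x ^ k • (⊤ : M) := by
      intro k
      induction k with
      | zero => rw [pow_zero, LatticeModule.one_smul]
      | succ k ih =>
        refine le_trans ih ?_
        rw [pow_succ, LatticeModule.mul_smul]
        exact lm_smul_mono_right _ hx
    have hle : (⊤ : M) ≤ N := by
      calc (⊤ : M) ≤ x ^ n • ⊤ := hchain n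
        _ ≤ a • ⊤ := lm_smul_mono_left hxn ⊤
        _ ≤ N := colon_smul_le N ⊤
    exact absurd (top_le_iff.mp hle) (ne_of_lt hN.1)
  -- the colon of `(lrad a) • ⊤` is "prime-like"
  set s := colon L (lrad a • (⊤ : M)) (⊤ : M) with hs
  have hps : lrad a ≤ s := le_colon le_rfl
  have hsmult : ∀ b c : L, b * c ≤ s → b ≤ s ∨ c ≤ s := by
    intro b c hbc
    by_cases hb : b ≤ s
    · exact Or.inl hb
    · right
      have hex : ∃ x, (IsCompactElement x ∧ x ≤ b) ∧ ¬ x ≤ s := by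
        by_contra hcon
        push_neg at hcon
        apply hb
        conv_lhs => rw [MultiplicativeLattice.compactlyGenerated b]
        exact _root_.sSup_le fun x hx => hcon x hx
      obtain ⟨x, ⟨hxc, hxb⟩, hxs⟩ := hex
      conv_lhs => rw [MultiplicativeLattice.compactlyGenerated c]
      apply _root_.sSup_le
      rintro y ⟨hyc, hyb⟩
      have hxyle : x * y ≤ s := by
        calc x * y ≤ b * y := by rw [mul_comm, mul_comm b y]; exact ml_mul_mono_right y hxb
          _ ≤ b * c := ml_mul_mono_right b hyb
          _ ≤ s := hbc
      have hxytop : (x * y) • (⊤ : M) ≤ lrad a • ⊤ :=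
        le_trans (lm_smul_mono_left hxyle ⊤) (colon_smul_le _ ⊤)
      have hxyrad : x * y ≤ lrad a :=
        key_compact_le hmul hPGM hcomp N
          (MultiplicativeLattice.mul_compact x y hxc hyc) hxytop
      rcases hprime.2 x y hxyrad with h | h
      · exact absurd (le_trans h hps) hxs
      · exact le_trans h hps
  -- `(lrad a) • ⊤` is prime in `M`
  have hPrimeM : IsPrimeM L (lrad a • (⊤ : M)) := by
    refine ⟨hproper, fun b X hbX => ?_⟩
    have hXeq : colon L X (⊤ : M) • (⊤ : M) = X := mulmod_colon_smul hmul X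
    have hmm : (b * colon L X ⊤) • (⊤ : M) ≤ lrad a • ⊤ := by
      rw [LatticeModule.mul_smul, hXeq]
      exact hbX
    rcases hsmult _ _ (le_colon hmm) with h | h
    · exact Or.inr (le_trans (lm_smul_mono_left h ⊤) (colon_smul_le _ ⊤))
    · refine Or.inl ?_
      rw [← hXeq]
      exact le_trans (lm_smul_mono_left h ⊤) (colon_smul_le _ ⊤)
  -- `(lrad a) • ⊤ ≤ mrad N`
  have hle1 : lrad a • (⊤ : M) ≤ mrad L N := by
    apply _root_.le_sInf
    rintro P ⟨hP, hNP⟩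
    have htmult : ∀ b c : L, b * c ≤ colon L P (⊤ : M) →
        b ≤ colon L P (⊤ : M) ∨ c ≤ colon L P (⊤ : M) := by
      intro b c h
      have h1 : (b * c) • (⊤ : M) ≤ P :=
        le_trans (lm_smul_mono_left h ⊤) (colon_smul_le P ⊤)
      rw [LatticeModule.mul_smul] at h1
      rcases hP.2 b (c • ⊤) h1 with h' | h'
      · exact Or.inr (le_colon h')
      · exact Or.inl (le_colon h')
    have haP : a ≤ colon L P (⊤ : M) :=
      sSup_le_sSup fun z (hz : z • (⊤ : M) ≤ N) =>
        show z • (⊤ : M) ≤ P from le_trans hz hNP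
    have hradP : lrad a ≤ colon L P (⊤ : M) := lrad_le_primelike htmult haP
    exact le_trans (lm_smul_mono_left hradP ⊤) (colon_smul_le P ⊤)
  have hle2 : mrad L N ≤ lrad a • (⊤ : M) := _root_.sInf_le ⟨hPrimeM, hNle⟩
  have hradeq : mrad L N = lrad a • (⊤ : M) := le_antisymm hle2 hle1
  have hsup : N ⊔ lrad a • (⊤ : M) = lrad a • (⊤ : M) := sup_eq_right.mpr hNle
  refine ⟨by rw [hsup, hradeq], by rw [hsup]; exact hPrimeM, by rw [hradeq]; exact hPrimeM⟩
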